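/- The independence Metropolis–Hastings kernel with proposal g and target f satisfying f(x) ≤ M g(x) for all x has transition density bounded below by f(z)/M off the diagonal, and consequently is uniformly ergodic: d_TV(pⁿ(x,·), f) ≤ (1 − 1/M)ⁿ for all x and n. -/

import Mathlib

open MeasureTheory

noncomputable def measureIterate {α : Type*} [MeasurableSpace α]
    (κ : α → Measure α) : ℕ → α → Measure α
  | 0, x => Measure.dirac x
  | n + 1, x => (measureIterate κ n x).bind κ

/-!
An accepted move from `x` to `z` has density
`g z · min {1, f z g x / (f x g z)} = min {g z, f z g x / f x} ≥ f z / M`, so every transition law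
dominates `(1/M) π` with `π = f μ`. The accepted flow `f x g z a(x, z) = min (f x g z) (f z g x)`
is symmetric, so `π` is stationary. Doeblin's argument then shows that the `n`-step law dominates
`(1 - (1 - 1/M)ⁿ) π`, and for probability measures this is the total variation bound.
-/

open scoped ENNReal

section Doeblin

variable {α : Type*} [MeasurableSpace α] {κ : α → Measure α}

lemma isProbabilityMeasure_measureIterate (hκ : Measurable κ)
    [∀ x, IsProbabilityMeasure (κ x)] (n : ℕ) (x : α) :
    IsProbabilityMeasure (measureIterate κ n x) := by
  induction n with
  | zero => rw [measureIterate]; infer_instance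
  | succ n ih =>
    rw [measureIterate]
    exact isProbabilityMeasure_bind hκ.aemeasurable (ae_of_all _ inferInstance)

/-- `ν.bind κ = ε π + ν.bind (κ - ε π)`, and by stationarity of `π` the second term dominates
`c (1 - ε) π`. -/
lemma smul_le_bind_of_minorization {π ν : Measure α} [IsProbabilityMeasure π]
    [IsProbabilityMeasure ν] (hκ : Measurable κ) (hπ : π.bind κ = π) {ε c : ℝ≥0∞}
    (hmin : ∀ x, ε • π ≤ κ x) (hc : c • π ≤ ν) :
    (ε + c * (1 - ε)) • π ≤ ν.bind κ := by
  refine Measure.le_iff.2 fun A hA => ?_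
  set h : α → ℝ≥0∞ := fun y => κ y A - ε * π A
  have hsplit : ∀ (ρ : Measure α) [IsProbabilityMeasure ρ],
      ∫⁻ y, κ y A ∂ρ = ε * π A + ∫⁻ y, h y ∂ρ := fun ρ _ => by
    calc ∫⁻ y, κ y A ∂ρ = ∫⁻ y, (ε * π A + h y) ∂ρ :=
          lintegral_congr fun y => (add_tsub_cancel_of_le (hmin y A)).symm
      _ = ε * π A + ∫⁻ y, h y ∂ρ := by
          rw [lintegral_add_left measurable_const, lintegral_const, measure_univ, mul_one]
  have hh_π : ∫⁻ y, h y ∂π = (1 - ε) * π A := by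
    rw [ENNReal.sub_mul fun _ _ => measure_ne_top π A, one_mul]
    refine ENNReal.eq_sub_of_add_eq' (measure_ne_top π A) ?_
    rw [add_comm, ← hsplit, ← Measure.bind_apply hA hκ.aemeasurable, hπ]
  calc ((ε + c * (1 - ε)) • π) A = ε * π A + c * ((1 - ε) * π A) := by
        rw [Measure.smul_apply, smul_eq_mul]; ring
    _ = ε * π A + ∫⁻ y, h y ∂(c • π) := by rw [lintegral_smul_measure, hh_π, smul_eq_mul]
    _ ≤ ε * π A + ∫⁻ y, h y ∂ν := add_le_add le_rfl (lintegral_mono' hc le_rfl)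
    _ = ν.bind κ A := by rw [← hsplit, Measure.bind_apply hA hκ.aemeasurable]

lemma one_sub_add_one_sub_pow_mul {δ : ℝ≥0∞} (hδ : δ ≤ 1) (n : ℕ) :
    (1 - δ) + (1 - δ ^ n) * δ = 1 - δ ^ (n + 1) := by
  rw [ENNReal.sub_mul fun _ _ => ne_top_of_le_ne_top ENNReal.one_ne_top hδ, one_mul, ← pow_succ,
    tsub_add_tsub_cancel hδ (pow_le_of_le_one zero_le hδ n.succ_ne_zero)]

theorem one_sub_pow_smul_le_measureIterate (hκ : Measurable κ) [∀ x, IsProbabilityMeasure (κ x)]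
    {π : Measure α} [IsProbabilityMeasure π] (hπ : π.bind κ = π) {ε : ℝ≥0∞} (hε : ε ≤ 1)
    (hmin : ∀ x, ε • π ≤ κ x) (n : ℕ) (x : α) :
    (1 - (1 - ε) ^ n) • π ≤ measureIterate κ n x := by
  induction n with
  | zero => simp [Measure.zero_le]
  | succ n ih =>
    have := isProbabilityMeasure_measureIterate hκ n x
    have hδ := one_sub_add_one_sub_pow_mul (δ := 1 - ε) tsub_le_self n
    rw [ENNReal.sub_sub_cancel ENNReal.one_ne_top hε] at hδ
    rw [← hδ]
    exact smul_le_bind_of_minorization hκ hπ hmin ih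

theorem abs_measureReal_sub_le_of_smul_le {π ν : Measure α} [IsProbabilityMeasure π]
    [IsProbabilityMeasure ν] {t : ℝ≥0∞} (ht : t ≤ 1) (h : (1 - t) • π ≤ ν) {A : Set α}
    (hA : MeasurableSet A) : |ν.real A - π.real A| ≤ t.toReal := by
  have hreal : ∀ B, (1 - t.toReal) * π.real B ≤ ν.real B := fun B => by
    have := ENNReal.toReal_mono (measure_ne_top ν B) (h B)
    rwa [Measure.smul_apply, smul_eq_mul, ENNReal.toReal_mul,
      ENNReal.toReal_sub_of_le ht ENNReal.one_ne_top, ENNReal.toReal_one] at this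
  have hA' := hreal A
  have hAc := hreal Aᶜ
  rw [measureReal_compl hA, measureReal_compl hA, probReal_univ, probReal_univ] at hAc
  have ht0 : 0 ≤ t.toReal := ENNReal.toReal_nonneg
  have hp0 : 0 ≤ π.real A := measureReal_nonneg
  have hp1 : π.real A ≤ 1 := measureReal_le_one
  rw [abs_sub_le_iff]
  constructor <;> nlinarith

end Doeblin

section Metropolis

variable {α : Type*} [MeasurableSpace α] (μ : Measure α)

/-- `q x z` is the density of accepted moves (proposal density times acceptance probability); the
rejected mass stays at `x`. -/
noncomputable def metropolisKernel (q : α → α → ℝ≥0∞) (x : α) : Measure α :=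
  μ.withDensity (q x) + (1 - ∫⁻ z, q x z ∂μ) • Measure.dirac x

variable {μ} {q : α → α → ℝ≥0∞}

lemma metropolisKernel_apply (x : α) {A : Set α} (hA : MeasurableSet A) :
    metropolisKernel μ q x A
      = ∫⁻ z in A, q x z ∂μ + (1 - ∫⁻ z, q x z ∂μ) * A.indicator 1 x := by
  rw [metropolisKernel, Measure.add_apply, withDensity_apply _ hA, Measure.smul_apply,
    Measure.dirac_apply' _ hA, smul_eq_mul]

lemma isProbabilityMeasure_metropolisKernel {x : α} (hq : ∫⁻ z, q x z ∂μ ≤ 1) :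
    IsProbabilityMeasure (metropolisKernel μ q x) := by
  constructor
  rw [metropolisKernel_apply x MeasurableSet.univ, Measure.restrict_univ, Set.indicator_univ,
    Pi.one_apply, mul_one, add_tsub_cancel_of_le hq]

lemma measurable_metropolisKernel [SFinite μ] (hq : Measurable (Function.uncurry q)) :
    Measurable (metropolisKernel μ q) := by
  refine Measure.measurable_of_measurable_coe _ fun A hA => ?_
  simp_rw [metropolisKernel_apply _ hA]
  exact (hq.lintegral_prod_right').add
    ((measurable_const.sub hq.lintegral_prod_right').mul (measurable_one.indicator hA))

lemma lintegral_mul_setLIntegral_of_detailedBalance [SFinite μ] {f : α → ℝ≥0∞}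
    (hq : Measurable (Function.uncurry q)) (hf : Measurable f)
    (hbal : ∀ x z, f x * q x z = f z * q z x) (A : Set α) :
    ∫⁻ x, f x * ∫⁻ z in A, q x z ∂μ ∂μ = ∫⁻ z in A, f z * ∫⁻ x, q z x ∂μ ∂μ := by
  have hq_left : ∀ x, Measurable (q x) := fun x => hq.comp measurable_prodMk_left
  calc ∫⁻ x, f x * ∫⁻ z in A, q x z ∂μ ∂μ = ∫⁻ x, ∫⁻ z in A, f x * q x z ∂μ ∂μ := by
        simp_rw [lintegral_const_mul _ (hq_left _)]
    _ = ∫⁻ z in A, ∫⁻ x, f x * q x z ∂μ ∂μ :=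
        lintegral_lintegral_swap ((hf.comp measurable_fst).mul hq).aemeasurable
    _ = ∫⁻ z in A, f z * ∫⁻ x, q z x ∂μ ∂μ := by
        simp_rw [hbal, lintegral_const_mul _ (hq_left _)]

theorem bind_metropolisKernel_withDensity [SFinite μ] {f : α → ℝ≥0∞}
    (hq : Measurable (Function.uncurry q)) (hq1 : ∀ x, ∫⁻ z, q x z ∂μ ≤ 1) (hf : Measurable f)
    (hbal : ∀ x z, f x * q x z = f z * q z x) :
    (μ.withDensity f).bind (metropolisKernel μ q) = μ.withDensity f := by
  have hκ := measurable_metropolisKernel (μ := μ) hq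
  ext A hA
  have hκA : Measurable fun x => metropolisKernel μ q x A := (Measure.measurable_coe hA).comp hκ
  have hfQA : Measurable fun x => f x * ∫⁻ z in A, q x z ∂μ := hf.mul hq.lintegral_prod_right'
  have hfQ : Measurable fun x => f x * ∫⁻ z, q x z ∂μ := hf.mul hq.lintegral_prod_right'
  have hrej : ∀ x, f x * ((1 - ∫⁻ z, q x z ∂μ) * A.indicator 1 x)
      = A.indicator (fun x => f x * (1 - ∫⁻ z, q x z ∂μ)) x := fun x => by
    by_cases hx : x ∈ A <;> simp [hx]
  calc (μ.withDensity f).bind (metropolisKernel μ q) A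
      = ∫⁻ x, f x * metropolisKernel μ q x A ∂μ := by
        rw [Measure.bind_apply hA hκ.aemeasurable,
          lintegral_withDensity_eq_lintegral_mul _ hf hκA]
        rfl
    _ = ∫⁻ z in A, f z * ∫⁻ x, q z x ∂μ ∂μ + ∫⁻ x in A, f x * (1 - ∫⁻ z, q x z ∂μ) ∂μ := by
        simp_rw [metropolisKernel_apply _ hA, mul_add, hrej]
        rw [lintegral_add_left hfQA, lintegral_indicator hA,
          lintegral_mul_setLIntegral_of_detailedBalance hq hf hbal]
    _ = ∫⁻ z in A, f z ∂μ := by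
        rw [← lintegral_add_left hfQ]
        refine lintegral_congr fun z => ?_
        rw [← mul_add, add_tsub_cancel_of_le (hq1 z), mul_one]
    _ = μ.withDensity f A := (withDensity_apply _ hA).symm

theorem smul_withDensity_le_metropolisKernel {f : α → ℝ≥0∞} (hf : Measurable f) {c : ℝ≥0∞}
    (hmin : ∀ x z, c * f z ≤ q x z) (x : α) :
    c • μ.withDensity f ≤ metropolisKernel μ q x := by
  rw [← withDensity_smul c hf]
  exact (withDensity_mono (ae_of_all _ (hmin x))).trans (Measure.le_add_right le_rfl)

end Metropolis

section RealDensity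

variable {α : Type*} [MeasurableSpace α] {μ : Measure α} {p : α → ℝ}

lemma lintegral_ofReal_eq_one (hp : 0 ≤ p) (hp1 : ∫ x, p x ∂μ = 1) :
    ∫⁻ x, ENNReal.ofReal (p x) ∂μ = 1 := by
  rw [← ofReal_integral_eq_lintegral_ofReal (.of_integral_ne_zero (by simp [hp1]))
    (ae_of_all _ hp), hp1, ENNReal.ofReal_one]

lemma isProbabilityMeasure_withDensity_ofReal (hp : 0 ≤ p) (hp1 : ∫ x, p x ∂μ = 1) :
    IsProbabilityMeasure (μ.withDensity fun x => ENNReal.ofReal (p x)) :=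
  ⟨by rw [withDensity_apply _ .univ, Measure.restrict_univ, lintegral_ofReal_eq_one hp hp1]⟩

lemma ofReal_one_sub_integral (hp : 0 ≤ p) (hpm : AEStronglyMeasurable p μ)
    (hp1 : ∫⁻ x, ENNReal.ofReal (p x) ∂μ ≤ 1) :
    ENNReal.ofReal (1 - ∫ x, p x ∂μ) = 1 - ∫⁻ x, ENNReal.ofReal (p x) ∂μ := by
  rw [integral_eq_lintegral_of_nonneg_ae (ae_of_all _ hp) hpm,
    ENNReal.ofReal_sub _ ENNReal.toReal_nonneg, ENNReal.ofReal_one,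
    ENNReal.ofReal_toReal (ne_top_of_le_ne_top ENNReal.one_ne_top hp1)]

end RealDensity

section IndependenceSampler

variable {α : Type*} (f g : α → ℝ)

noncomputable def independenceAcceptance (x z : α) : ℝ :=
  min 1 (f z * g x / (f x * g z))

noncomputable def independenceDensity (x z : α) : ℝ≥0∞ :=
  ENNReal.ofReal (g z * independenceAcceptance f g x z)

variable {f g}

lemma independenceAcceptance_nonneg (hf : 0 ≤ f) (hg : 0 ≤ g) (x z : α) :
    0 ≤ independenceAcceptance f g x z :=
  le_min zero_le_one
    (div_nonneg (mul_nonneg (hf z) (hg x)) (mul_nonneg (hf x) (hg z)))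

lemma independenceAcceptance_le_one (x z : α) : independenceAcceptance f g x z ≤ 1 :=
  min_le_left _ _

lemma mul_mul_independenceAcceptance {x z : α} (hx : 0 < f x) (hz : 0 < g z) :
    f x * (g z * independenceAcceptance f g x z) = min (f x * g z) (f z * g x) := by
  rw [independenceAcceptance, mul_min_of_nonneg _ _ hz.le, mul_min_of_nonneg _ _ hx.le]
  congr 1
  · ring
  · field_simp

lemma div_le_mul_independenceAcceptance {M : ℝ} (hM : 0 < M) {x z : α} (hx : 0 < f x)
    (hz : 0 ≤ f z) (hgz : 0 < g z) (hMx : f x ≤ M * g x) (hMz : f z ≤ M * g z) :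
    f z / M ≤ g z * independenceAcceptance f g x z := by
  refine le_of_mul_le_mul_left ?_ hx
  rw [mul_mul_independenceAcceptance hx hgz]
  refine le_min ?_ ?_
  · exact mul_le_mul_of_nonneg_left ((div_le_iff₀' hM).2 hMz) hx.le
  · calc f x * (f z / M) = f z * (f x / M) := by ring
      _ ≤ f z * g x := mul_le_mul_of_nonneg_left ((div_le_iff₀' hM).2 hMx) hz

lemma ofReal_mul_independenceDensity_comm (hf : ∀ x, 0 < f x) (hg : ∀ x, 0 < g x) (x z : α) :
    ENNReal.ofReal (f x) * independenceDensity f g x z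
      = ENNReal.ofReal (f z) * independenceDensity f g z x := by
  rw [independenceDensity, independenceDensity, ← ENNReal.ofReal_mul (hf x).le,
    ← ENNReal.ofReal_mul (hf z).le, mul_mul_independenceAcceptance (hf x) (hg z),
    mul_mul_independenceAcceptance (hf z) (hg x), min_comm]

lemma ofReal_one_div_mul_le_independenceDensity {M : ℝ} (hM : 0 < M) (hf : ∀ x, 0 < f x)
    (hg : ∀ x, 0 < g x) (hMg : ∀ x, f x ≤ M * g x) (x z : α) :
    ENNReal.ofReal (1 / M) * ENNReal.ofReal (f z) ≤ independenceDensity f g x z := by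
  rw [← ENNReal.ofReal_mul (by positivity), one_div_mul_eq_div]
  exact ENNReal.ofReal_le_ofReal
    (div_le_mul_independenceAcceptance hM (hf x) (hf z).le (hg z) (hMg x) (hMg z))

variable [MeasurableSpace α]

lemma measurable_independenceAcceptance (hf : Measurable f) (hg : Measurable g) :
    Measurable (Function.uncurry (independenceAcceptance f g)) :=
  measurable_const.min (((hf.comp measurable_snd).mul (hg.comp measurable_fst)).div
    ((hf.comp measurable_fst).mul (hg.comp measurable_snd)))

lemma measurable_independenceDensity (hf : Measurable f) (hg : Measurable g) :
    Measurable (Function.uncurry (independenceDensity f g)) :=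
  ((hg.comp measurable_snd).mul (measurable_independenceAcceptance hf hg)).ennreal_ofReal

lemma lintegral_independenceDensity_le_one {μ : Measure α} (hg : 0 ≤ g) (hg1 : ∫ x, g x ∂μ = 1)
    (x : α) : ∫⁻ z, independenceDensity f g x z ∂μ ≤ 1 :=
  (lintegral_mono fun z => ENNReal.ofReal_le_ofReal
    (mul_le_of_le_one_right (hg z) (independenceAcceptance_le_one x z))).trans_eq
    (lintegral_ofReal_eq_one hg hg1)

lemma withDensity_add_ofReal_smul_dirac_eq_metropolisKernel {μ : Measure α} (hf : Measurable f)
    (hg : Measurable g) (hf0 : 0 ≤ f) (hg0 : 0 ≤ g) (hg1 : ∫ x, g x ∂μ = 1) (x : α) :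
    μ.withDensity (fun z => ENNReal.ofReal (g z * independenceAcceptance f g x z))
        + ENNReal.ofReal (1 - ∫ z, g z * independenceAcceptance f g x z ∂μ) • Measure.dirac x
      = metropolisKernel μ (independenceDensity f g) x := by
  have hga (z : α) : 0 ≤ g z * independenceAcceptance f g x z :=
    mul_nonneg (hg0 z) (independenceAcceptance_nonneg hf0 hg0 x z)
  rw [ofReal_one_sub_integral hga
    (hg.mul (measurable_independenceAcceptance hf hg).of_uncurry_left).aestronglyMeasurable
    (lintegral_independenceDensity_le_one hg0 hg1 x)]
  rfl

end IndependenceSampler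

/-- **Uniform ergodicity of the independence sampler.** With target density `f` and
proposal density `g` (w.r.t. `μ`) satisfying `f ≤ M g` everywhere, the independence
Metropolis–Hastings kernel
`κ x = (accepted-move part with density z ↦ g z · a x z) + (rejection mass at x)`,
where `a x z = min {1, (f z g x)/(f x g z)}`, has off-diagonal transition density bounded
below by `f z / M`, and is uniformly ergodic:
`d_TV(κⁿ(x,·), f dμ) ≤ (1 − 1/M)ⁿ` for all `x` and `n`. -/
theorem independence_sampler_uniformly_ergodic
    {α : Type*} [MeasurableSpace α] (μ : Measure α) [SigmaFinite μ]
    (f g : α → ℝ) (hf : Measurable f) (hg : Measurable g)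
    (hf0 : ∀ x, 0 < f x) (hg0 : ∀ x, 0 < g x)
    (hf1 : ∫ x, f x ∂μ = 1) (hg1 : ∫ x, g x ∂μ = 1)
    (M : ℝ) (hM : 1 ≤ M) (hMg : ∀ x, f x ≤ M * g x)
    (a : α → α → ℝ) (ha : ∀ x z, a x z = min 1 (f z * g x / (f x * g z)))
    (r : α → ℝ) (hr : ∀ x, r x = 1 - ∫ z, g z * a x z ∂μ)
    (κ : α → Measure α)
    (hκ : ∀ x, κ x = μ.withDensity (fun z => ENNReal.ofReal (g z * a x z))
        + (ENNReal.ofReal (r x)) • Measure.dirac x) :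
    (∀ x z, f z / M ≤ g z * a x z) ∧
      ∀ (x : α) (n : ℕ) (A : Set α), MeasurableSet A →
        |((measureIterate κ n x) A).toReal
            - ((μ.withDensity fun z => ENNReal.ofReal (f z)) A).toReal|
          ≤ (1 - 1 / M) ^ n := by
  have hM0 : 0 < M := by linarith
  have hf_nonneg : 0 ≤ f := fun x => (hf0 x).le
  have hg_nonneg : 0 ≤ g := fun x => (hg0 x).le
  obtain rfl : a = independenceAcceptance f g := by funext x z; exact ha x z
  obtain rfl : κ = metropolisKernel μ (independenceDensity f g) := by
    funext x
    rw [hκ, hr,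
      withDensity_add_ofReal_smul_dirac_eq_metropolisKernel hf hg hf_nonneg hg_nonneg hg1]
  have hq_meas := measurable_independenceDensity hf hg
  have hq_le := lintegral_independenceDensity_le_one (f := f) (μ := μ) hg_nonneg hg1
  have := isProbabilityMeasure_withDensity_ofReal (μ := μ) hf_nonneg hf1
  have := fun x => isProbabilityMeasure_metropolisKernel (hq_le x)
  have hκm := measurable_metropolisKernel (μ := μ) hq_meas
  have hstat := bind_metropolisKernel_withDensity hq_meas hq_le hf.ennreal_ofReal
    (ofReal_mul_independenceDensity_comm hf0 hg0)
  have hmin := smul_withDensity_le_metropolisKernel (μ := μ) hf.ennreal_ofReal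
    (ofReal_one_div_mul_le_independenceDensity hM0 hf0 hg0 hMg)
  have hε : ENNReal.ofReal (1 / M) ≤ 1 := ENNReal.ofReal_le_one.2 ((div_le_one hM0).2 hM)
  refine ⟨fun x z => div_le_mul_independenceAcceptance hM0 (hf0 x) (hf0 z).le (hg0 z) (hMg x)
    (hMg z), fun x n A hA => ?_⟩
  have := isProbabilityMeasure_measureIterate hκm n x
  have htv := abs_measureReal_sub_le_of_smul_le (pow_le_one₀ zero_le tsub_le_self)
    (one_sub_pow_smul_le_measureIterate hκm hstat hε hmin n x) hA
  rwa [ENNReal.toReal_pow, ENNReal.toReal_sub_of_le hε ENNReal.one_ne_top, ENNReal.toReal_one,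
    ENNReal.toReal_ofReal (by positivity)] at htv
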